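/- Let K be a finite extension of ℚ_p and V a bounded element of Gr^alg(K). If V is integral (‖v_i‖ ≤ 1 for all sufficiently large i in the standard basis), then the Maya diagram M(V^red) of the reduction is a Maya diagram with the same index as V, and κ(V) ≤ κ(V^red) in the componentwise order on partitions. -/

import Mathlib

/- **Statement 8.**  `K` is a finite extension of `ℚ_p`, abstracted as a
nontrivially normed field with ultrametric norm whose value group is discrete
(hypothesis `hdisc`).  We model the paper's `K((T))` by
`LaurentSeries K = HahnSeries ℤ K` via `T ↦ t⁻¹` (the paper's coefficient of
`T^m` is `coeff (-m)`, the paper degree is `-(order)`, and the paper's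
`T^n K[[T]]` is the set of series supported in `ℤ_{≥ -n}`). -/

/-- The ring of integers `O_K = {x : ‖x‖ ≤ 1}`. -/
def intRing (K : Type*) [NormedField K] [IsUltrametricDist K] : Subring K where
  carrier := {x | ‖x‖ ≤ 1}
  mul_mem' := fun {a b} ha hb => by
    simpa using mul_le_one₀ ha (norm_nonneg b) hb
  one_mem' := by simp
  add_mem' := fun {a b} ha hb =>
    le_trans (IsUltrametricDist.norm_add_le_max a b) (max_le ha hb)
  zero_mem' := by simp
  neg_mem' := fun {a} ha => by simpa using ha

/-- The maximal ideal `M_K = {x : ‖x‖ < 1}` of `O_K`. -/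
def maxIdeal (K : Type*) [NormedField K] [IsUltrametricDist K] :
    Ideal (intRing K) where
  carrier := {x | ‖(x : K)‖ < 1}
  add_mem' := fun {a b} ha hb =>
    lt_of_le_of_lt (IsUltrametricDist.norm_add_le_max (a : K) (b : K)) (max_lt ha hb)
  zero_mem' := by simp
  smul_mem' := fun c x hx => by
    show ‖((c • x : intRing K) : K)‖ < 1
    have hcx : ((c • x : intRing K) : K) = (c : K) * (x : K) := rfl
    rw [hcx, norm_mul]
    calc ‖(c : K)‖ * ‖(x : K)‖ ≤ 1 * ‖(x : K)‖ :=
          mul_le_mul_of_nonneg_right c.2 (norm_nonneg _)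
      _ = ‖(x : K)‖ := one_mul _
      _ < 1 := hx

/-- The residue field `𝔽 = O_K / M_K`. -/
def ResidueF (K : Type*) [NormedField K] [IsUltrametricDist K] : Type _ :=
  intRing K ⧸ maxIdeal K

noncomputable instance (K : Type*) [NormedField K] [IsUltrametricDist K] :
    CommRing (ResidueF K) :=
  inferInstanceAs (CommRing (intRing K ⧸ maxIdeal K))

open Classical in
/-- Reduction `O_K → 𝔽`, extended by `0` outside `O_K`. -/
noncomputable def residue (K : Type*) [NormedField K] [IsUltrametricDist K]
    (x : K) : ResidueF K :=
  if h : ‖x‖ ≤ 1 then Ideal.Quotient.mk (maxIdeal K) ⟨x, h⟩ else 0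

/-- `M(V)` for a subspace `V ⊆ K((T))`: the set of paper degrees `-(order v)`
of nonzero elements. -/
def degSet {K : Type*} [Field K] (V : Submodule K (LaurentSeries K)) : Set ℤ :=
  {d | ∃ v ∈ V, v ≠ 0 ∧ -(v.order) = d}

/-- `M(S)` for a set `S` of Laurent series over the residue field. -/
def degSetRed {K : Type*} [NormedField K] [IsUltrametricDist K]
    (S : Set (LaurentSeries (ResidueF K))) : Set ℤ :=
  {d | ∃ v ∈ S, v ≠ 0 ∧ -(v.order) = d}

/-- A Maya diagram. -/
def IsMaya (M : Set ℤ) : Prop :=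
  (M ∩ Set.Iic 0).Finite ∧ (Set.Ioi 0 \ M).Finite

/-- The reduction `V^red ⊆ 𝔽((T))` of `V`: coefficientwise reductions of the
elements of `O(V) = {v ∈ V : ‖v‖ ≤ 1}` (sup norm on coefficients). -/
def Vred {K : Type*} [NormedField K] [IsUltrametricDist K] [CompleteSpace K]
    (V : Submodule K (LaurentSeries K)) : Set (LaurentSeries (ResidueF K)) :=
  {w | ∃ v ∈ V, (∀ m : ℤ, ‖v.coeff m‖ ≤ 1) ∧ ∀ m : ℤ, w.coeff m = residue K (v.coeff m)}

/-- Index of a Maya diagram: `|M ∩ ℤ_{≤0}| − |ℤ_{>0} \ M|`. -/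
noncomputable def mayaIndex (M : Set ℤ) (h : IsMaya M) : ℤ :=
  (h.1.toFinset.card : ℤ) - (h.2.toFinset.card : ℤ)

/-
Let `U n = V ⊓ degreeLE K n`; it has dimension `#(M(V) ∩ (-∞, n])`. Representatives in `U n` of
distinct reduced degrees are linearly independent by the ultrametric inequality, and by `π`-adic
successive approximation (using that the value group is discrete) together with the closedness of
finite-dimensional subspaces they span `U n`. So the reduction of the unit ball of `U n` has
exactly `dim U n` degrees, all of them `≤ n`. Once `n` exceeds the degrees of the finitely many
non-integral basis vectors, every reduced degree `≤ n` of `V` is already realised in `U n`. Hence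
the counting functions of `M(V)` and `M(V^red)` agree for large `n`, which gives the Maya property
and the index, and `M(V^red) ∩ (-∞, n]` is never smaller than `M(V) ∩ (-∞, n]`, which gives
`sbar i ≤ s i`.
-/

open Set

lemma IsMaya.finite_inter_Iic {M : Set ℤ} (h : IsMaya M) (n : ℤ) : (M ∩ Iic n).Finite :=
  (h.1.union (finite_Icc 0 n)).subset fun d ⟨hdM, hdn⟩ =>
    (le_or_gt d 0).imp (fun hd => ⟨hdM, hd⟩) fun hd => ⟨hd.le, hdn⟩

lemma mayaIndex_eq_ncard_sub {M : Set ℤ} (h : IsMaya M) {n : ℤ} (hn : 0 ≤ n)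
    (hM : Ioi n ⊆ M) : mayaIndex M h = (M ∩ Iic n).ncard - n := by
  have hsplit : M ∩ Iic n = (M ∩ Iic 0) ∪ (Ioc 0 n ∩ M) := by
    ext d
    simp only [mem_inter_iff, mem_Iic, mem_union, mem_Ioc]
    constructor
    · rintro ⟨hdM, hdn⟩
      exact (le_or_gt d 0).imp (⟨hdM, ·⟩) (⟨⟨·, hdn⟩, hdM⟩)
    · rintro (⟨hdM, hd⟩ | ⟨⟨_, hd⟩, hdM⟩)
      exacts [⟨hdM, hd.trans hn⟩, ⟨hdM, hd⟩]
  have hgap : Ioi 0 \ M = Ioc 0 n \ M := by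
    ext d
    simp only [mem_sdiff, mem_Ioi, mem_Ioc]
    exact ⟨fun ⟨hd, hdM⟩ => ⟨⟨hd, not_lt.1 fun h => hdM (hM h)⟩, hdM⟩,
      fun ⟨⟨hd, _⟩, hdM⟩ => ⟨hd, hdM⟩⟩
  have hIoc : (Ioc 0 n ∩ M).ncard + (Ioc 0 n \ M).ncard = (n - 0).toNat := by
    rw [ncard_inter_add_ncard_sdiff_eq_ncard _ _ (finite_Ioc 0 n), ← Finset.coe_Ioc,
      ncard_coe_finset, Int.card_Ioc]
  have hdisj : Disjoint (M ∩ Iic 0) (Ioc 0 n ∩ M) :=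
    disjoint_left.2 fun d ⟨_, hd⟩ ⟨⟨hd', _⟩, _⟩ => absurd (mem_Iic.1 hd) (not_le.2 hd')
  rw [mayaIndex, ← ncard_eq_toFinset_card _ h.1, ← ncard_eq_toFinset_card _ h.2, hsplit,
    ncard_union_eq hdisj h.1 ((finite_Ioc 0 n).inter_of_left M), hgap]
  omega

theorem IsMaya.of_ncard_inter_Iic_eq {M R : Set ℤ} (hM : IsMaya M)
    (hfin : ∀ n, (R ∩ Iic n).Finite) {n₀ : ℤ} (hsub : M ∩ Ioi n₀ ⊆ R)
    (hcard : ∀ n, n₀ ≤ n → (R ∩ Iic n).ncard = (M ∩ Iic n).ncard) :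
    ∃ hR : IsMaya R, mayaIndex R hR = mayaIndex M hM := by
  obtain ⟨B, hB⟩ := hM.2.bddAbove
  set n := max (max n₀ 0) B
  have hMn : Ioi n ⊆ M := fun d (hd : n < d) => by
    by_contra hdM
    have : d ≤ B := hB ⟨mem_Ioi.2 (by omega), hdM⟩
    omega
  have hRn : Ioi n ⊆ R := fun d (hd : n < d) => hsub ⟨hMn hd, mem_Ioi.2 (by omega)⟩
  have hR : IsMaya R := ⟨hfin 0, (finite_Ioc 0 n).subset fun d ⟨hd0, hdR⟩ =>
    ⟨hd0, not_lt.1 fun h => hdR (hRn h)⟩⟩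
  exact ⟨hR, by rw [mayaIndex_eq_ncard_sub hR (by omega) hRn,
    mayaIndex_eq_ncard_sub hM (by omega) hMn, hcard n (by omega)]⟩

theorem StrictMono.le_of_lt_ncard_inter_Iic {f : ℕ → ℤ} (hf : StrictMono f) {i : ℕ} {n : ℤ}
    (h : i < (range f ∩ Iic n).ncard) : f i ≤ n := by
  by_contra! hlt
  have hsub : range f ∩ Iic n ⊆ f '' Iio i := by
    rintro _ ⟨⟨j, rfl⟩, hj⟩
    exact ⟨j, hf.lt_iff_lt.1 (lt_of_le_of_lt hj hlt), rfl⟩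
  have := ncard_le_ncard hsub ((finite_Iio i).image f)
  rw [ncard_image_of_injective _ hf.injective, ← Finset.coe_Iio, ncard_coe_finset,
    Nat.card_Iio] at this
  omega

theorem StrictMono.lt_ncard_inter_Iic {f : ℕ → ℤ} (hf : StrictMono f) (i : ℕ)
    (hfin : (range f ∩ Iic (f i)).Finite) : i < (range f ∩ Iic (f i)).ncard := by
  have hsub : f '' Iic i ⊆ range f ∩ Iic (f i) := by
    rintro _ ⟨j, hj, rfl⟩
    exact ⟨⟨j, rfl⟩, hf.monotone hj⟩
  have := ncard_le_ncard hsub hfin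
  rw [ncard_image_of_injective _ hf.injective, ← Finset.coe_Iic, ncard_coe_finset,
    Nat.card_Iic] at this
  omega

open HahnSeries Module Submodule

namespace MayaReduction

section Ultrametric

variable {M : Type*} [SeminormedAddCommGroup M] [IsUltrametricDist M]

lemma norm_sub_le_max (a b : M) : ‖a - b‖ ≤ max ‖a‖ ‖b‖ := by
  simpa [sub_eq_add_neg] using IsUltrametricDist.norm_add_le_max a (-b)

lemma norm_sub_eq_left_of_lt {a b : M} (h : ‖b‖ < ‖a‖) : ‖a - b‖ = ‖a‖ := by
  rw [sub_eq_add_neg, IsUltrametricDist.norm_add_eq_max_of_norm_ne_norm (by simpa using h.ne'),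
    norm_neg, max_eq_left h.le]

lemma norm_sum_eq_of_forall_lt {ι : Type*} {t : Finset ι} {f : ι → M} {j : ι} (hj : j ∈ t)
    (h : ∀ i ∈ t, i ≠ j → ‖f i‖ < ‖f j‖) : ‖∑ i ∈ t, f i‖ = ‖f j‖ := by
  classical
  rw [← Finset.add_sum_erase t f hj]
  rcases (t.erase j).eq_empty_or_nonempty with he | hne
  · rw [he, Finset.sum_empty, add_zero]
  · obtain ⟨i, hi, hle⟩ := IsUltrametricDist.exists_norm_finsetSum_le_of_nonempty hne f
    have hlt := hle.trans_lt (h i (Finset.mem_of_mem_erase hi) (Finset.ne_of_mem_erase hi))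
    rw [IsUltrametricDist.norm_add_eq_max_of_norm_ne_norm hlt.ne', max_eq_left hlt.le]

end Ultrametric

section Degree

variable {K : Type*} [Field K]

def degreeLE (K : Type*) [Field K] (n : ℤ) : Submodule K (LaurentSeries K) where
  carrier := {x | ∀ m, n < m → x.coeff (-m) = 0}
  add_mem' ha hb m hm := by simp [ha m hm, hb m hm]
  zero_mem' _ _ := rfl
  smul_mem' c x hx m hm := by simp [hx m hm]

lemma neg_order_le_iff_mem_degreeLE {n : ℤ} {x : LaurentSeries K} (hx : x ≠ 0) :
    -x.order ≤ n ↔ x ∈ degreeLE K n := by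
  refine ⟨fun h m hm => coeff_eq_zero_of_lt_order (by omega), fun h => ?_⟩
  by_contra! hlt
  exact coeff_order_eq_zero.not.2 hx (by simpa using h _ hlt)

lemma degreeLE_mono {m n : ℤ} (h : m ≤ n) : degreeLE K m ≤ degreeLE K n :=
  fun _ hx k hk => hx k (lt_of_le_of_lt h hk)

lemma mem_degreeLE_neg_order (x : LaurentSeries K) : x ∈ degreeLE K (-x.order) := by
  rcases eq_or_ne x 0 with rfl | hx
  · exact zero_mem _
  · exact (neg_order_le_iff_mem_degreeLE hx).1 le_rfl

lemma mem_degreeLE_of_coeff_eq_zero {n : ℤ} {x : LaurentSeries K} (hx : x ∈ degreeLE K (n + 1))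
    (h : x.coeff (-(n + 1)) = 0) : x ∈ degreeLE K n := fun m hm => by
  rcases (Int.add_one_le_iff.2 hm).eq_or_lt with rfl | hlt
  exacts [h, hx m hlt]

lemma neg_order_eq_iff {F : Type*} [Zero F] {w : LaurentSeries F} {d : ℤ} :
    (w ≠ 0 ∧ -w.order = d) ↔ w.coeff (-d) ≠ 0 ∧ ∀ m, d < m → w.coeff (-m) = 0 := by
  constructor
  · rintro ⟨hw, rfl⟩
    exact ⟨by simpa using coeff_order_eq_zero.not.2 hw,
      fun m hm => coeff_eq_zero_of_lt_order (by omega)⟩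
  · rintro ⟨h1, h2⟩
    have hw : w ≠ 0 := fun h => h1 (by simp [h])
    refine ⟨hw, le_antisymm (not_lt.1 fun hlt => ?_) (by linarith [order_le_of_coeff_ne_zero h1])⟩
    exact coeff_order_eq_zero.not.2 hw (by simpa using h2 _ hlt)

lemma sub_smul_mem_degreeLE {n : ℤ} {x y : LaurentSeries K} (hx : x ∈ degreeLE K (n + 1))
    (hy : y ∈ degreeLE K (n + 1)) (hy1 : y.coeff (-(n + 1)) = 1) :
    x - x.coeff (-(n + 1)) • y ∈ degreeLE K n :=
  mem_degreeLE_of_coeff_eq_zero (sub_mem hx (Submodule.smul_mem _ _ hy)) (by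
    rw [coeff_sub, coeff_smul, hy1, smul_eq_mul, mul_one, sub_self])

theorem linearIndependent_of_injective_order {ι : Type*} {w : ι → LaurentSeries K}
    (hw : ∀ i, w i ≠ 0) (hinj : Function.Injective fun i => (w i).order) :
    LinearIndependent K w := by
  classical
  rw [linearIndependent_iff']
  intro t g hsum i hi
  by_contra hgi
  obtain ⟨j, hj, hjmin⟩ :=
    (t.filter (g · ≠ 0)).exists_min_image (fun i => (w i).order) ⟨i, by simp [hi, hgi]⟩
  rw [Finset.mem_filter] at hj
  have hcoeff := congrArg (coeff · (w j).order) hsum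
  simp only [coeff_sum, coeff_smul, smul_eq_mul, coeff_zero] at hcoeff
  rw [Finset.sum_eq_single j (fun k hk hkj => ?_) (absurd hj.1)] at hcoeff
  · exact mul_ne_zero hj.2 (coeff_order_eq_zero.not.2 (hw j)) hcoeff
  by_cases hgk : g k = 0
  · rw [hgk, zero_mul]
  · have hlt := (hjmin k (by simp [hk, hgk])).lt_of_ne (hinj.ne hkj.symm)
    rw [coeff_eq_zero_of_lt_order hlt, mul_zero]

def coeffsAt (K : Type*) [Field K] (S : Set ℤ) : LaurentSeries K →ₗ[K] (S → K) :=
  LinearMap.pi fun d => coeff.linearMap (-(d : ℤ))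

variable {V : Submodule K (LaurentSeries K)} {n : ℤ}

lemma eq_zero_of_coeffsAt_eq_zero {x : LaurentSeries K} (hx : x ∈ V ⊓ degreeLE K n)
    (h0 : coeffsAt K (degSet V ∩ Iic n) x = 0) : x = 0 := by
  by_contra hne
  have hd : -x.order ∈ degSet V ∩ Iic n :=
    ⟨⟨x, hx.1, hne, rfl⟩, (neg_order_le_iff_mem_degreeLE hne).2 hx.2⟩
  exact coeff_order_eq_zero.not.2 hne (by simpa [coeffsAt] using congrFun h0 ⟨_, hd⟩)

lemma injective_coeffsAt_comp_subtype :
    Function.Injective (coeffsAt K (degSet V ∩ Iic n) ∘ₗ (V ⊓ degreeLE K n).subtype) :=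
  (injective_iff_map_eq_zero _).2 fun x hx =>
    Subtype.ext (eq_zero_of_coeffsAt_eq_zero x.2 hx)

lemma finiteDimensional_inf_degreeLE (hS : (degSet V ∩ Iic n).Finite) :
    FiniteDimensional K ↥(V ⊓ degreeLE K n) :=
  have := hS.to_subtype
  Module.Finite.of_injective _ injective_coeffsAt_comp_subtype

lemma finrank_inf_degreeLE_le (hS : (degSet V ∩ Iic n).Finite) :
    finrank K ↥(V ⊓ degreeLE K n) ≤ (degSet V ∩ Iic n).ncard := by
  have := hS.fintype
  calc finrank K ↥(V ⊓ degreeLE K n) ≤ finrank K (↥(degSet V ∩ Iic n) → K) :=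
        LinearMap.finrank_le_finrank_of_injective injective_coeffsAt_comp_subtype
    _ = (degSet V ∩ Iic n).ncard := by
        rw [Module.finrank_fintype_fun_eq_card, ncard_eq_toFinset_card', toFinset_card]

end Degree

section EchelonBasis

variable {K : Type*} [Field K] {V : Submodule K (LaurentSeries K)} {s : ℕ → ℤ}
  {v : ℕ → LaurentSeries K}

structure IsEchelonBasis (V : Submodule K (LaurentSeries K)) (s : ℕ → ℤ)
    (v : ℕ → LaurentSeries K) : Prop where
  strictMono : StrictMono s
  range_eq : range s = degSet V
  mem : ∀ i, v i ∈ V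
  coeff_self : ∀ i, (v i).coeff (-(s i)) = 1
  mem_degreeLE : ∀ i, v i ∈ degreeLE K (s i)

namespace IsEchelonBasis

lemma ne_zero_and_neg_order (hb : IsEchelonBasis V s v) (i : ℕ) :
    v i ≠ 0 ∧ -(v i).order = s i :=
  neg_order_eq_iff.2 ⟨by simp [hb.coeff_self i], hb.mem_degreeLE i⟩

lemma linearIndependent (hb : IsEchelonBasis V s v) : LinearIndependent K v :=
  linearIndependent_of_injective_order (fun i => (hb.ne_zero_and_neg_order i).1) fun i j h =>
    hb.strictMono.injective <| by
      rw [← (hb.ne_zero_and_neg_order i).2, ← (hb.ne_zero_and_neg_order j).2]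
      exact congrArg Neg.neg h

lemma finrank_span_image_eq {n : ℤ} (hb : IsEchelonBasis V s v) (hS : (degSet V ∩ Iic n).Finite) :
    finrank K (span K (v '' (s ⁻¹' Iic n))) = (degSet V ∩ Iic n).ncard := by
  have himage : s '' (s ⁻¹' Iic n) = degSet V ∩ Iic n := by
    rw [image_preimage_eq_range_inter, hb.range_eq]
  have hI : (s ⁻¹' Iic n).Finite :=
    Finite.of_finite_image (himage ▸ hS) hb.strictMono.injective.injOn
  have := hI.fintype
  rw [← himage, ncard_image_of_injective _ hb.strictMono.injective, image_eq_range,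
    ncard_eq_toFinset_card', toFinset_card]
  exact finrank_span_eq_card (hb.linearIndependent.comp _ Subtype.val_injective)

lemma span_eq {n : ℤ} (hb : IsEchelonBasis V s v) (hS : (degSet V ∩ Iic n).Finite) :
    span K (v '' (s ⁻¹' Iic n)) = V ⊓ degreeLE K n := by
  have := finiteDimensional_inf_degreeLE hS
  have hle : span K (v '' (s ⁻¹' Iic n)) ≤ V ⊓ degreeLE K n := span_le.2 <| by
    rintro _ ⟨i, hi, rfl⟩
    exact ⟨hb.mem i, fun m hm => hb.mem_degreeLE i m (lt_of_le_of_lt hi hm)⟩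
  refine Submodule.eq_of_le_of_finrank_eq hle (le_antisymm (Submodule.finrank_mono hle) ?_)
  rw [hb.finrank_span_image_eq hS]
  exact finrank_inf_degreeLE_le hS

lemma finrank_inf_degreeLE {n : ℤ} (hb : IsEchelonBasis V s v) (hS : (degSet V ∩ Iic n).Finite) :
    finrank K ↥(V ⊓ degreeLE K n) = (degSet V ∩ Iic n).ncard := by
  rw [← hb.span_eq hS, hb.finrank_span_image_eq hS]

end IsEchelonBasis

end EchelonBasis

section Reduction

variable {K : Type*} [NormedField K]

def boundedSeries (K : Type*) [NormedField K] : Submodule K (LaurentSeries K) where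
  carrier := {x | ∃ C, ∀ m, ‖x.coeff m‖ ≤ C}
  add_mem' := fun ⟨C, hC⟩ ⟨D, hD⟩ =>
    ⟨C + D, fun m => (norm_add_le _ _).trans (add_le_add (hC m) (hD m))⟩
  zero_mem' := ⟨0, by simp⟩
  smul_mem' c _ := fun ⟨C, hC⟩ => ⟨‖c‖ * C, fun m => by
    rw [coeff_smul, smul_eq_mul, norm_mul]
    exact mul_le_mul_of_nonneg_left (hC m) (norm_nonneg c)⟩

lemma exists_pow_smul_integral {π : K} (hπ0 : 0 < ‖π‖) (hπ1 : ‖π‖ < 1) {x : LaurentSeries K}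
    (hx : x ∈ boundedSeries K) : ∃ a : ℕ, ∀ m, ‖(π ^ a • x).coeff m‖ ≤ 1 := by
  obtain ⟨C, hC⟩ := hx
  obtain ⟨a, ha⟩ := pow_unbounded_of_one_lt C ((one_lt_inv₀ hπ0).2 hπ1)
  refine ⟨a, fun m => ?_⟩
  calc ‖(π ^ a • x).coeff m‖ = ‖π‖ ^ a * ‖x.coeff m‖ := by
        rw [coeff_smul, smul_eq_mul, norm_mul, norm_pow]
    _ ≤ ‖π‖ ^ a * ‖π‖⁻¹ ^ a := by gcongr; exact (hC m).trans ha.le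
    _ = 1 := by rw [← mul_pow, mul_inv_cancel₀ hπ0.ne', one_pow]

lemma norm_le_of_norm_lt_one {π : K} (hπ0 : 0 < ‖π‖) (hπ1 : ‖π‖ < 1)
    (hval : ∀ x : K, x ≠ 0 → ∃ n : ℤ, ‖x‖ = ‖π‖ ^ n) {c : K} (hc : ‖c‖ < 1) : ‖c‖ ≤ ‖π‖ := by
  rcases eq_or_ne c 0 with rfl | hc0
  · simp [hπ0.le]
  obtain ⟨e, he⟩ := hval c hc0
  rw [he] at hc ⊢
  have he1 : 1 ≤ e := by
    by_contra! h
    exact (one_le_zpow_of_nonpos₀ hπ0 hπ1.le (by omega)).not_gt hc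
  simpa using zpow_le_zpow_right_of_le_one₀ hπ0 hπ1.le he1

/-- `x` has integral coefficients and its coefficientwise reduction has paper degree `d`. -/
structure HasRedDegree (x : LaurentSeries K) (d : ℤ) : Prop where
  integral : ∀ m, ‖x.coeff m‖ ≤ 1
  norm_coeff_eq_one : ‖x.coeff (-d)‖ = 1
  norm_coeff_lt_one : ∀ m, d < m → ‖x.coeff (-m)‖ < 1

def redDegrees (U : Submodule K (LaurentSeries K)) : Set ℤ :=
  {d | ∃ x ∈ U, HasRedDegree x d}

lemma redDegrees_inf_degreeLE_subset (V : Submodule K (LaurentSeries K)) (n : ℤ) :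
    redDegrees (V ⊓ degreeLE K n) ⊆ redDegrees V ∩ Iic n := by
  rintro d ⟨x, hx, hxd⟩
  refine ⟨⟨x, hx.1, hxd⟩, mem_Iic.2 (not_lt.1 fun hnd => ?_)⟩
  simpa [hx.2 d hnd] using hxd.norm_coeff_eq_one

lemma exists_hasRedDegree_le {x : LaurentSeries K} {r : ℤ} (hx : ∀ m, ‖x.coeff m‖ ≤ 1)
    (htop : ∀ m, r < m → ‖x.coeff (-m)‖ < 1) {j : ℤ} (hj : ‖x.coeff j‖ = 1) :
    ∃ d ≤ r, HasRedDegree x d := by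
  obtain ⟨d, hd, hdmax⟩ := Int.exists_greatest_of_bdd (P := fun m => ‖x.coeff (-m)‖ = 1)
    ⟨r, fun m hm => not_lt.1 fun hrm => (htop m hrm).ne hm⟩ ⟨-j, by simpa using hj⟩
  exact ⟨d, not_lt.1 fun hrd => (htop d hrd).ne hd,
    hx, hd, fun m hdm => (hx _).lt_of_ne fun hm => (hdmax m hm).not_gt hdm⟩

lemma IsEchelonBasis.inter_Ioi_subset_redDegrees {V : Submodule K (LaurentSeries K)}
    {s : ℕ → ℤ} {v : ℕ → LaurentSeries K} (hb : IsEchelonBasis V s v) {N : ℕ}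
    (hN : ∀ i, N ≤ i → ∀ m, ‖(v i).coeff m‖ ≤ 1) : degSet V ∩ Ioi (s N) ⊆ redDegrees V := by
  rintro _ ⟨hd, hdN⟩
  obtain ⟨i, rfl⟩ := hb.range_eq ▸ hd
  exact ⟨v i, hb.mem i, hN i (hb.strictMono.lt_iff_lt.1 hdN).le,
    by rw [hb.coeff_self, norm_one],
    fun m hm => by rw [hb.mem_degreeLE i m hm, norm_zero]; exact one_pos⟩

lemma exists_sub_norm_coeff_le_pow {π : K} (hπ0 : 0 < ‖π‖) {U W : Submodule K (LaurentSeries K)}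
    (hWU : W ≤ U) (happrox : ∀ z ∈ U, (∀ m, ‖z.coeff m‖ ≤ 1) →
      ∃ y ∈ W, ∀ m, ‖(z - y).coeff m‖ ≤ ‖π‖)
    {x : LaurentSeries K} (hx : x ∈ U) (hxint : ∀ m, ‖x.coeff m‖ ≤ 1) (k : ℕ) :
    ∃ y ∈ W, ∀ m, ‖(x - y).coeff m‖ ≤ ‖π‖ ^ k := by
  induction k with
  | zero => exact ⟨0, zero_mem _, by simpa using hxint⟩
  | succ k ih =>
    obtain ⟨y₁, hy₁W, hy₁⟩ := ih
    have hπk : π ^ k ≠ 0 := pow_ne_zero _ (norm_pos_iff.1 hπ0)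
    obtain ⟨y₂, hy₂W, hy₂⟩ := happrox ((π ^ k)⁻¹ • (x - y₁))
      (Submodule.smul_mem _ _ (sub_mem hx (hWU hy₁W))) fun m => by
        rw [coeff_smul, smul_eq_mul, norm_mul, norm_inv, norm_pow]
        exact inv_mul_le_one_of_le₀ (hy₁ m) (by positivity)
    refine ⟨y₁ + π ^ k • y₂, add_mem hy₁W (Submodule.smul_mem _ _ hy₂W), fun m => ?_⟩
    have hxy : x - (y₁ + π ^ k • y₂) = π ^ k • ((π ^ k)⁻¹ • (x - y₁) - y₂) := by
      rw [smul_sub, smul_inv_smul₀ hπk]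
      abel
    rw [hxy, coeff_smul, smul_eq_mul, norm_mul, norm_pow, pow_succ]
    exact mul_le_mul_of_nonneg_left (hy₂ m) (by positivity)

variable [IsUltrametricDist K]

lemma norm_coeff_sub_smul_le (x y : LaurentSeries K) (c : K) (m : ℤ) :
    ‖(x - c • y).coeff m‖ ≤ max ‖x.coeff m‖ (‖c‖ * ‖y.coeff m‖) := by
  rw [coeff_sub, coeff_smul, smul_eq_mul, ← norm_mul]
  exact norm_sub_le_max _ _

lemma HasRedDegree.sub_smul {x y : LaurentSeries K} {d : ℤ} {c : K} (hx : HasRedDegree x d)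
    (hc : ‖c‖ < 1) (hy : ∀ m, ‖y.coeff m‖ ≤ 1) : HasRedDegree (x - c • y) d := by
  have hsmall m : ‖c‖ * ‖y.coeff m‖ < 1 :=
    lt_of_le_of_lt (mul_le_of_le_one_right (norm_nonneg c) (hy m)) hc
  refine ⟨fun m => (norm_coeff_sub_smul_le x y c m).trans (max_le (hx.integral m) (hsmall m).le),
    ?_, fun m hm => (norm_coeff_sub_smul_le x y c _).trans_lt
      (max_lt (hx.norm_coeff_lt_one m hm) (hsmall _))⟩
  rw [coeff_sub, coeff_smul, smul_eq_mul, norm_sub_eq_left_of_lt, hx.norm_coeff_eq_one]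
  rw [hx.norm_coeff_eq_one, norm_mul]
  exact hsmall _

lemma HasRedDegree.sub_div_smul {z w : LaurentSeries K} {d : ℤ} (hz : HasRedDegree z d)
    (hw : HasRedDegree w d) :
    (∀ m, ‖(z - (z.coeff (-d) / w.coeff (-d)) • w).coeff m‖ ≤ 1) ∧
      ∀ m, d ≤ m → ‖(z - (z.coeff (-d) / w.coeff (-d)) • w).coeff (-m)‖ < 1 := by
  set c := z.coeff (-d) / w.coeff (-d)
  have hc : ‖c‖ = 1 := by rw [norm_div, hz.norm_coeff_eq_one, hw.norm_coeff_eq_one, div_one]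
  have hw0 : w.coeff (-d) ≠ 0 := norm_ne_zero_iff.1 (by rw [hw.norm_coeff_eq_one]; simp)
  refine ⟨fun m => (norm_coeff_sub_smul_le z w c m).trans
    (max_le (hz.integral m) (by rw [hc, one_mul]; exact hw.integral m)), fun m hm => ?_⟩
  rcases hm.eq_or_lt with rfl | hlt
  · rw [coeff_sub, coeff_smul, smul_eq_mul, div_mul_cancel₀ _ hw0, sub_self, norm_zero]
    exact one_pos
  · exact (norm_coeff_sub_smul_le z w c _).trans_lt
      (max_lt (hz.norm_coeff_lt_one m hlt) (by rw [hc, one_mul]; exact hw.norm_coeff_lt_one m hlt))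

/-- In a vanishing combination, the coefficient at the top reduced degree among the terms whose
scalar has maximal norm would itself have that maximal norm. -/
theorem linearIndependent_of_hasRedDegree {ι : Type*} {w : ι → LaurentSeries K} {deg : ι → ℤ}
    (hdeg : Function.Injective deg) (hw : ∀ i, HasRedDegree (w i) (deg i)) :
    LinearIndependent K w := by
  classical
  rw [linearIndependent_iff']
  intro t g hsum i hi
  by_contra hgi
  obtain ⟨k, hk, hkmax⟩ := t.exists_max_image (‖g ·‖) ⟨i, hi⟩
  have hα : 0 < ‖g k‖ := (norm_pos_iff.2 hgi).trans_le (hkmax i hi)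
  obtain ⟨j, hj, hjmax⟩ :=
    (t.filter (‖g ·‖ = ‖g k‖)).exists_max_image deg ⟨k, by simp [hk]⟩
  rw [Finset.mem_filter] at hj
  have hcoeff := congrArg (coeff · (-deg j)) hsum
  simp only [coeff_sum, coeff_smul, smul_eq_mul, coeff_zero] at hcoeff
  have hnorm : ‖∑ l ∈ t, g l * (w l).coeff (-deg j)‖ = ‖g k‖ := by
    rw [norm_sum_eq_of_forall_lt hj.1, norm_mul, (hw j).norm_coeff_eq_one, mul_one, hj.2]
    intro l hl hlj
    rw [norm_mul, norm_mul, (hw j).norm_coeff_eq_one, mul_one, hj.2]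
    rcases (hkmax l hl).lt_or_eq with hlt | heq
    · exact (mul_le_of_le_one_right (norm_nonneg _) ((hw l).integral _)).trans_lt hlt
    · have hlj' : deg l < deg j :=
        (hjmax l (by simp [hl, heq])).lt_of_ne (hdeg.ne hlj)
      rw [heq]
      exact mul_lt_of_lt_one_right hα ((hw l).norm_coeff_lt_one _ hlj')
  rw [hcoeff, norm_zero] at hnorm
  exact hα.ne hnorm

lemma exists_linearIndependent_reps (U : Submodule K (LaurentSeries K)) :
    ∃ w : redDegrees U → U, LinearIndependent K w := by
  choose w hwU hw using fun d : redDegrees U => (d.2 : ∃ x ∈ U, HasRedDegree x d)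
  exact ⟨fun d => ⟨w d, hwU d⟩, LinearIndependent.of_comp U.subtype
    (linearIndependent_of_hasRedDegree Subtype.val_injective hw)⟩

lemma finite_redDegrees (U : Submodule K (LaurentSeries K)) [FiniteDimensional K U] :
    (redDegrees U).Finite :=
  let ⟨_, hw⟩ := exists_linearIndependent_reps U
  finite_coe_iff.1 hw.finite

lemma ncard_redDegrees_le_finrank (U : Submodule K (LaurentSeries K)) [FiniteDimensional K U] :
    (redDegrees U).ncard ≤ finrank K U := by
  obtain ⟨_, hw⟩ := exists_linearIndependent_reps U
  have := (finite_redDegrees U).fintype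
  rw [ncard_eq_toFinset_card', toFinset_card]
  exact hw.fintype_card_le_finrank

lemma residue_eq_zero_iff {x : K} (hx : ‖x‖ ≤ 1) : residue K x = 0 ↔ ‖x‖ < 1 := by
  rw [show residue K x = Ideal.Quotient.mk (maxIdeal K) ⟨x, hx⟩ from dif_pos hx]
  exact Ideal.Quotient.eq_zero_iff_mem

noncomputable def reduction (x : LaurentSeries K) : LaurentSeries (ResidueF K) where
  coeff m := residue K (x.coeff m)
  isPWO_support' := x.isPWO_support.mono fun m hm h0 => hm <| by
    change residue K (x.coeff m) = 0
    rw [h0, residue_eq_zero_iff (by simp)]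
    simp

lemma degSetRed_Vred [CompleteSpace K] (V : Submodule K (LaurentSeries K)) :
    degSetRed (Vred V) = redDegrees V := by
  ext d
  constructor
  · rintro ⟨w, ⟨x, hxV, hxint, hw⟩, hwd⟩
    obtain ⟨h1, h2⟩ := neg_order_eq_iff.1 hwd
    refine ⟨x, hxV, hxint, ?_, fun m hm => ?_⟩
    · rw [hw, ne_eq, residue_eq_zero_iff (hxint _), not_lt] at h1
      exact le_antisymm (hxint _) h1
    · simpa [hw, residue_eq_zero_iff (hxint _)] using h2 m hm
  · rintro ⟨x, hxV, hxd⟩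
    refine ⟨reduction x, ⟨x, hxV, hxd.integral, fun m => rfl⟩,
      neg_order_eq_iff.2 ⟨?_, fun m hm => ?_⟩⟩
    · simp [reduction, residue_eq_zero_iff (hxd.integral _), hxd.norm_coeff_eq_one]
    · simpa [reduction, residue_eq_zero_iff (hxd.integral _)] using hxd.norm_coeff_lt_one m hm

/-- Descending induction on the top degree `k` at which `z` has a unit coefficient: subtract a unit
multiple of a representative of reduced degree `k`. -/
theorem exists_sub_norm_coeff_le {π : K} (hπ : ∀ c : K, ‖c‖ < 1 → ‖c‖ ≤ ‖π‖)
    {U W : Submodule K (LaurentSeries K)} (hWU : W ≤ U) (hfin : (redDegrees U).Finite)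
    (hW : ∀ d ∈ redDegrees U, ∃ w ∈ W, HasRedDegree w d) {r : ℤ} {z : LaurentSeries K}
    (hz : z ∈ U) (hzint : ∀ m, ‖z.coeff m‖ ≤ 1) (htop : ∀ m, r < m → ‖z.coeff (-m)‖ < 1) :
    ∃ y ∈ W, ∀ m, ‖(z - y).coeff m‖ ≤ ‖π‖ := by
  obtain ⟨b, hb⟩ := hfin.bddBelow
  suffices ∀ k, min b (r + 1) - 1 ≤ k → ∀ z ∈ U, (∀ m, ‖z.coeff m‖ ≤ 1) →
      (∀ m, k < m → ‖z.coeff (-m)‖ < 1) → ∃ y ∈ W, ∀ m, ‖(z - y).coeff m‖ ≤ ‖π‖ from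
    this r (by omega) z hz hzint htop
  intro k hk
  induction k, hk using Int.leInduction with
  | base =>
    intro z hz hzint htop
    refine ⟨0, zero_mem _, fun m => not_lt.1 fun hm => ?_⟩
    rw [sub_zero] at hm
    obtain ⟨d, hd, hzd⟩ := exists_hasRedDegree_le hzint htop
      (le_antisymm (hzint m) (not_lt.1 fun h => (hπ _ h).not_gt hm))
    have := hb ⟨z, hz, hzd⟩
    omega
  | succ k _ ih =>
    intro z hz hzint htop
    by_cases hlt : ‖z.coeff (-(k + 1))‖ < 1
    · exact ih z hz hzint fun m hm =>
        (Int.add_one_le_iff.2 hm).eq_or_lt.elim (· ▸ hlt) (htop m)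
    have hzk : HasRedDegree z (k + 1) := ⟨hzint, le_antisymm (hzint _) (not_lt.1 hlt), htop⟩
    obtain ⟨w, hwW, hw⟩ := hW _ ⟨z, hz, hzk⟩
    set c := z.coeff (-(k + 1)) / w.coeff (-(k + 1))
    obtain ⟨hint', htop'⟩ := hzk.sub_div_smul hw
    obtain ⟨y, hyW, hy⟩ :=
      ih (z - c • w) (sub_mem hz (Submodule.smul_mem _ _ (hWU hwW))) hint' htop'
    refine ⟨y + c • w, add_mem hyW (Submodule.smul_mem _ _ hwW), fun m => ?_⟩
    rw [show z - (y + c • w) = z - c • w - y by abel]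
    exact hy m

variable {V : Submodule K (LaurentSeries K)} {s : ℕ → ℤ} {v : ℕ → LaurentSeries K} {n : ℤ}

/-- Above the degrees of the non-integral basis vectors, the top coefficients of a representative
can be eliminated by integral basis vectors without changing its reduced degree. -/
lemma IsEchelonBasis.redDegrees_inter_Iic (hb : IsEchelonBasis V s v) {N : ℕ}
    (hN : ∀ i, N ≤ i → ∀ m, ‖(v i).coeff m‖ ≤ 1) (hn : s N ≤ n) :
    redDegrees V ∩ Iic n = redDegrees (V ⊓ degreeLE K n) := by
  refine subset_antisymm ?_ (redDegrees_inf_degreeLE_subset V n)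
  rintro d ⟨⟨x, hxV, hxd⟩, hdn⟩
  suffices ∀ k, n ≤ k → ∀ x ∈ V ⊓ degreeLE K k, HasRedDegree x d →
      d ∈ redDegrees (V ⊓ degreeLE K n) from
    this _ (le_max_left n (-x.order)) x
      ⟨hxV, degreeLE_mono (le_max_right _ _) (mem_degreeLE_neg_order x)⟩ hxd
  intro k hk
  induction k, hk using Int.leInduction with
  | base => exact fun x hx hxd => ⟨x, hx, hxd⟩
  | succ k hk ih =>
    rintro x ⟨hxV, hxk⟩ hxd
    by_cases hc : x.coeff (-(k + 1)) = 0
    · exact ih x ⟨hxV, mem_degreeLE_of_coeff_eq_zero hxk hc⟩ hxd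
    obtain ⟨J, hJ⟩ : k + 1 ∈ range s := by
      rw [hb.range_eq]
      exact ⟨x, hxV, neg_order_eq_iff.2 ⟨hc, hxk⟩⟩
    have hNJ : N ≤ J := hb.strictMono.le_iff_le.1 (by rw [mem_Iic] at hdn; omega)
    refine ih _ ⟨sub_mem hxV (Submodule.smul_mem _ _ (hb.mem J)),
      sub_smul_mem_degreeLE hxk (hJ ▸ hb.mem_degreeLE J) (hJ ▸ hb.coeff_self J)⟩
      (hxd.sub_smul (hxd.norm_coeff_lt_one _ (by rw [mem_Iic] at hdn; omega)) (hN J hNJ))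

lemma IsEchelonBasis.finite_redDegrees_inter_Iic (hb : IsEchelonBasis V s v) {N : ℕ}
    (hN : ∀ i, N ≤ i → ∀ m, ‖(v i).coeff m‖ ≤ 1) (hS : ∀ n, (degSet V ∩ Iic n).Finite) (n : ℤ) :
    (redDegrees V ∩ Iic n).Finite := by
  have := finiteDimensional_inf_degreeLE (hS (max n (s N)))
  refine (finite_redDegrees (V ⊓ degreeLE K (max n (s N)))).subset ?_
  rw [← hb.redDegrees_inter_Iic hN (le_max_right _ _)]
  exact inter_subset_inter_right _ (Iic_subset_Iic.2 (le_max_left _ _))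

end Reduction

section Closure

variable {K : Type*} [NontriviallyNormedField K] [IsUltrametricDist K] [CompleteSpace K]
  {V : Submodule K (LaurentSeries K)} {n : ℤ} {π : K} {s : ℕ → ℤ}
  {v : ℕ → LaurentSeries K}

/-- Limit step: finitely many coefficients determine elements of `V ⊓ degreeLE K n`, and the
image of the finite-dimensional `W` under them is closed. -/
theorem mem_of_norm_coeff_le_one (hπ0 : 0 < ‖π‖) (hπ1 : ‖π‖ < 1)
    (hS : (degSet V ∩ Iic n).Finite) {W : Submodule K (LaurentSeries K)}
    (hWU : W ≤ V ⊓ degreeLE K n) (happrox : ∀ z ∈ V ⊓ degreeLE K n, (∀ m, ‖z.coeff m‖ ≤ 1) →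
      ∃ y ∈ W, ∀ m, ‖(z - y).coeff m‖ ≤ ‖π‖)
    {x : LaurentSeries K} (hx : x ∈ V ⊓ degreeLE K n) (hxint : ∀ m, ‖x.coeff m‖ ≤ 1) :
    x ∈ W := by
  have := hS.fintype
  have := finiteDimensional_inf_degreeLE hS
  have := Submodule.finiteDimensional_of_le hWU
  set φ := coeffsAt K (degSet V ∩ Iic n)
  have hclosed : IsClosed (W.map φ : Set (↥(degSet V ∩ Iic n) → K)) :=
    Submodule.closed_of_finiteDimensional _
  obtain ⟨y, hyW, hxy⟩ : φ x ∈ W.map φ := by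
    refine hclosed.closure_subset (Metric.mem_closure_iff.2 fun ε hε => ?_)
    obtain ⟨k, hk⟩ := exists_pow_lt_of_lt_one hε hπ1
    obtain ⟨y, hyW, hy⟩ := exists_sub_norm_coeff_le_pow hπ0 hWU happrox hx hxint k
    refine ⟨φ y, ⟨y, hyW, rfl⟩, (dist_eq_norm _ _).trans_lt (lt_of_le_of_lt ?_ hk)⟩
    rw [← map_sub, pi_norm_le_iff_of_nonneg (by positivity)]
    exact fun d => hy _
  have := eq_zero_of_coeffsAt_eq_zero (sub_mem hx (hWU hyW)) (by rw [map_sub, hxy, sub_self])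
  rwa [sub_eq_zero.1 this]

theorem finrank_le_ncard_redDegrees (hπ0 : 0 < ‖π‖) (hπ1 : ‖π‖ < 1)
    (hπ : ∀ c : K, ‖c‖ < 1 → ‖c‖ ≤ ‖π‖) (hS : (degSet V ∩ Iic n).Finite)
    (hbdd : V ⊓ degreeLE K n ≤ boundedSeries K) :
    finrank K ↥(V ⊓ degreeLE K n) ≤ (redDegrees (V ⊓ degreeLE K n)).ncard := by
  set U := V ⊓ degreeLE K n
  have := finiteDimensional_inf_degreeLE hS
  have hfin := finite_redDegrees U
  have := hfin.fintype
  choose w hwU hw using fun d : redDegrees U => (d.2 : ∃ x ∈ U, HasRedDegree x d)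
  set W := span K (range w)
  have hWU : W ≤ U := span_le.2 (range_subset_iff.2 hwU)
  have hUW : U ≤ W := fun x hx => by
    obtain ⟨a, ha⟩ := exists_pow_smul_integral hπ0 hπ1 (hbdd hx)
    have hxW := mem_of_norm_coeff_le_one hπ0 hπ1 hS hWU
      (fun z hz hzint => exists_sub_norm_coeff_le hπ hWU hfin
        (fun d hd => ⟨w ⟨d, hd⟩, subset_span ⟨_, rfl⟩, hw _⟩) hz hzint
        (fun m hm => by rw [hz.2 m hm, norm_zero]; exact one_pos))
      (Submodule.smul_mem U _ hx) ha
    simpa [smul_smul, pow_ne_zero a (norm_pos_iff.1 hπ0)] using W.smul_mem (π ^ a)⁻¹ hxW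
  have := Submodule.finiteDimensional_of_le hWU
  calc finrank K U ≤ finrank K W := Submodule.finrank_mono hUW
    _ ≤ Fintype.card (redDegrees U) := finrank_range_le_card w
    _ = (redDegrees U).ncard := by rw [ncard_eq_toFinset_card', toFinset_card]

lemma IsEchelonBasis.ncard_redDegrees_inf_degreeLE (hb : IsEchelonBasis V s v)
    (hbound : ∀ i, v i ∈ boundedSeries K) (hπ0 : 0 < ‖π‖) (hπ1 : ‖π‖ < 1)
    (hπ : ∀ c : K, ‖c‖ < 1 → ‖c‖ ≤ ‖π‖) (hS : (degSet V ∩ Iic n).Finite) :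
    (redDegrees (V ⊓ degreeLE K n)).ncard = (degSet V ∩ Iic n).ncard := by
  have := finiteDimensional_inf_degreeLE hS
  have hbdd : V ⊓ degreeLE K n ≤ boundedSeries K :=
    hb.span_eq hS ▸ span_le.2 (image_subset_iff.2 fun i _ => hbound i)
  rw [← hb.finrank_inf_degreeLE hS]
  exact (ncard_redDegrees_le_finrank _).antisymm (finrank_le_ncard_redDegrees hπ0 hπ1 hπ hS hbdd)

end Closure

end MayaReduction

open MayaReduction

theorem integral_reduction_maya_kappa_general
    (K : Type*) [NontriviallyNormedField K] [IsUltrametricDist K] [CompleteSpace K]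
    (hdisc : ∃ π : K, 0 < ‖π‖ ∧ ‖π‖ < 1 ∧ ∀ x : K, x ≠ 0 → ∃ n : ℤ, ‖x‖ = ‖π‖ ^ n)
    (V : Submodule K (LaurentSeries K))
    (hMaya : IsMaya (degSet V))
    (s : ℕ → ℤ) (hs : StrictMono s) (hsM : Set.range s = degSet V)
    (v : ℕ → LaurentSeries K)
    (hvV : ∀ i, v i ∈ V)
    (hmonic : ∀ i, (v i).coeff (-(s i)) = 1)
    (hdeg : ∀ i, ∀ m : ℤ, s i < m → (v i).coeff (-m) = 0)
    (hbound : ∀ i, ∃ C : ℝ, ∀ m : ℤ, ‖(v i).coeff m‖ ≤ C)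
    (hint : ∃ N : ℕ, ∀ i, N ≤ i → ∀ m : ℤ, ‖(v i).coeff m‖ ≤ 1) :
    ∃ hMred : IsMaya (degSetRed (Vred V)),
      mayaIndex (degSetRed (Vred V)) hMred = mayaIndex (degSet V) hMaya ∧
      ∀ sbar : ℕ → ℤ, StrictMono sbar → Set.range sbar = degSetRed (Vred V) →
        (∀ i : ℕ, sbar i ≤ s i) ∧
        ∀ i : ℕ,
          ((i : ℤ) + 1 - mayaIndex (degSet V) hMaya - s i).toNat ≤
            ((i : ℤ) + 1 - mayaIndex (degSet V) hMaya - sbar i).toNat := by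
  obtain ⟨π, hπ0, hπ1, hval⟩ := hdisc
  obtain ⟨N, hN⟩ := hint
  have hb : IsEchelonBasis V s v := ⟨hs, hsM, hvV, hmonic, hdeg⟩
  have hS := hMaya.finite_inter_Iic
  have hcount n : (redDegrees (V ⊓ degreeLE K n)).ncard = (degSet V ∩ Iic n).ncard :=
    hb.ncard_redDegrees_inf_degreeLE hbound hπ0 hπ1 (fun _ => norm_le_of_norm_lt_one hπ0 hπ1 hval)
      (hS n)
  have hfin := hb.finite_redDegrees_inter_Iic hN hS
  rw [degSetRed_Vred]
  obtain ⟨hR, hindex⟩ := hMaya.of_ncard_inter_Iic_eq hfin (hb.inter_Ioi_subset_redDegrees hN)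
    fun n hn => by rw [hb.redDegrees_inter_Iic hN hn, hcount]
  refine ⟨hR, hindex, fun sbar hsbar hrange => ?_⟩
  have hle i : sbar i ≤ s i := by
    apply hsbar.le_of_lt_ncard_inter_Iic
    rw [hrange]
    calc i < (degSet V ∩ Iic (s i)).ncard := hsM ▸ hs.lt_ncard_inter_Iic i (hsM ▸ hS _)
      _ = (redDegrees (V ⊓ degreeLE K (s i))).ncard := (hcount _).symm
      _ ≤ (redDegrees V ∩ Iic (s i)).ncard :=
        ncard_le_ncard (redDegrees_inf_degreeLE_subset V _) (hfin _)
  exact ⟨hle, fun i => Int.toNat_le_toNat (by linarith [hle i])⟩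

/-- Let `V` be a bounded *integral* element of `Gr^alg(K)`
with standard basis `v` (monic of degree `s i`, triangular), i.e.
`‖v i‖ ≤ 1` for all sufficiently large `i`.  Then `M(V^red)` is a Maya
diagram with the same index as `M(V)`, and `κ(V) ≤ κ(V^red)` componentwise:
for an increasing enumeration `sbar` of `M(V^red)` one has `sbar i ≤ s i`,
and hence `(i + 1 − idx − s i) ≤ (i + 1 − idx − sbar i)` for each `i`, where
`idx` is the common index. -/
theorem integral_reduction_maya_kappa
    (K : Type*) [NontriviallyNormedField K] [IsUltrametricDist K] [CompleteSpace K]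
    (hdisc : ∃ π : K, 0 < ‖π‖ ∧ ‖π‖ < 1 ∧ ∀ x : K, x ≠ 0 → ∃ n : ℤ, ‖x‖ = ‖π‖ ^ n)
    (V : Submodule K (LaurentSeries K))
    (hMaya : IsMaya (degSet V))
    (s : ℕ → ℤ) (hs : StrictMono s) (hsM : Set.range s = degSet V)
    (v : ℕ → LaurentSeries K)
    (hvV : ∀ i, v i ∈ V)
    (hmonic : ∀ i, (v i).coeff (-(s i)) = 1)
    (hdeg : ∀ i, ∀ m : ℤ, s i < m → (v i).coeff (-m) = 0)
    (htri : ∀ i j, j < i → (v i).coeff (-(s j)) = 0)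
    (hbound : ∀ i, ∃ C : ℝ, ∀ m : ℤ, ‖(v i).coeff m‖ ≤ C)
    (hint : ∃ N : ℕ, ∀ i, N ≤ i → ∀ m : ℤ, ‖(v i).coeff m‖ ≤ 1) :
    ∃ hMred : IsMaya (degSetRed (Vred V)),
      mayaIndex (degSetRed (Vred V)) hMred = mayaIndex (degSet V) hMaya ∧
      ∀ sbar : ℕ → ℤ, StrictMono sbar → Set.range sbar = degSetRed (Vred V) →
        (∀ i : ℕ, sbar i ≤ s i) ∧
        ∀ i : ℕ,
          ((i : ℤ) + 1 - mayaIndex (degSet V) hMaya - s i).toNat ≤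
            ((i : ℤ) + 1 - mayaIndex (degSet V) hMaya - sbar i).toNat :=
  integral_reduction_maya_kappa_general K hdisc V hMaya s hs hsM v hvV hmonic hdeg hbound hint
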